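/- Let R > 0 and let Π be a measurable real-valued function on D = {(x,y) ∈ ℝ² : 0 ≤ x ≤ y}. Assume there exist constants ε₇ > −1, ε₈ > 0 and c > 0 such that |Π(x,y)| ≤ c · x^{ε₇} · y^{−ε₈} for all 0 < x < R and y > R. Then ∫∫_{{(x,y) : 0 ≤ x < R ≤ y}} |φ^{(R,T)}(x) − φ^{(R,T)}(y)|² · Π(x,y)/(y−x) dx dy → 0 as T → ∞. -/

import Mathlib

open MeasureTheory Filter

/-- The cutoff function `φ^{(R,T)}`: equal to `1` on `(-∞, R]`, to
`1 - log(x-R+1)/log(T-R+1)` on `[R, T]`, and to `0` on `[T, ∞)`. -/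
noncomputable def phi (R T x : ℝ) : ℝ :=
  if x ≤ R then 1
  else if x ≤ T then 1 - Real.log (x - R + 1) / Real.log (T - R + 1)
  else 0

/-!
Dominated convergence. Pointwise `φ^{(R,T)} → 1` as `T → ∞`, so the integrand tends to `0`.
For `T ≥ R + 2` we have `log (T - R + 1) ≥ 1` and `log (y - R + 1) ≤ y - R`, whence
`|φ(x) - φ(y)|² ≤ min 1 (y - R)` for `x ≤ R ≤ y`; dividing by `y - x ≥ y - R` this is at most
`(R + 1) / y`. The integrand is thus dominated by `c (R + 1) x^ε₇ y^(-ε₈-1)`, which is integrable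
on `(0, R) × (R, ∞)` because `ε₇ > -1` and `-ε₈ - 1 < -1`.
-/

open Set Topology

@[fun_prop]
lemma measurable_phi (R T : ℝ) : Measurable (phi R T) := by
  unfold phi
  exact Measurable.ite measurableSet_Iic measurable_const
    (Measurable.ite measurableSet_Iic (by fun_prop) measurable_const)

lemma phi_of_le {R T x : ℝ} (hx : x ≤ R) : phi R T x = 1 := if_pos hx

lemma phi_of_lt_of_le {R T x : ℝ} (hRx : R < x) (hxT : x ≤ T) :
    phi R T x = 1 - Real.log (x - R + 1) / Real.log (T - R + 1) := by
  rw [phi, if_neg hRx.not_ge, if_pos hxT]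

lemma tendsto_phi_atTop (R x : ℝ) : Tendsto (fun T => phi R T x) atTop (𝓝 1) := by
  rcases le_or_gt x R with hxR | hRx
  · simp only [phi_of_le hxR]
    exact tendsto_const_nhds
  have hlog : Tendsto (fun T => Real.log (T - R + 1)) atTop atTop :=
    Real.tendsto_log_atTop.comp <| tendsto_atTop_add_const_right _ _ <|
      tendsto_atTop_add_const_right _ (-R) tendsto_id
  have hlim : Tendsto (fun T => 1 - Real.log (x - R + 1) / Real.log (T - R + 1)) atTop (𝓝 1) := by
    simpa using tendsto_const_nhds.sub (tendsto_const_nhds.div_atTop hlog)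
  exact hlim.congr' <| (eventually_ge_atTop x).mono fun T hxT => (phi_of_lt_of_le hRx hxT).symm

lemma abs_phi_sub_phi_le {R T x y : ℝ} (hxR : x ≤ R) (hRy : R ≤ y) (hT : R + 2 ≤ T) :
    |phi R T x - phi R T y| ≤ min 1 (y - R) := by
  rw [phi_of_le hxR]
  rcases hRy.eq_or_lt with rfl | hRy
  · simp [phi_of_le le_rfl]
  rcases le_or_gt y T with hyT | hTy
  · have hlogT : 1 ≤ Real.log (T - R + 1) := by
      rw [Real.le_log_iff_exp_le (by linarith)]
      linarith [Real.exp_one_lt_d9]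
    have hlogy : 0 ≤ Real.log (y - R + 1) := Real.log_nonneg (by linarith)
    rw [phi_of_lt_of_le hRy hyT, sub_sub_cancel,
      abs_of_nonneg (div_nonneg hlogy (by linarith))]
    refine le_min ((div_le_one (by linarith)).2 (Real.log_le_log (by linarith) (by linarith))) ?_
    calc Real.log (y - R + 1) / Real.log (T - R + 1) ≤ Real.log (y - R + 1) :=
          div_le_self hlogy hlogT
      _ ≤ y - R := by linarith [Real.log_le_sub_one_of_pos (show 0 < y - R + 1 by linarith)]
  · rw [phi, if_neg (by linarith), if_neg hTy.not_ge]
    simp only [sub_zero, abs_one, le_min_iff, le_refl, true_and]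
    linarith

lemma min_one_sub_div_sub_le {R x y : ℝ} (hR : 0 < R) (hxR : x < R) (hRy : R ≤ y) :
    min 1 (y - R) / (y - x) ≤ (R + 1) / y := by
  rw [div_le_div_iff₀ (by linarith) (by linarith)]
  rcases le_total (y - R) 1 with h | h
  · rw [min_eq_right h]
    nlinarith [mul_nonneg (sub_nonneg.2 hRy) (show 0 ≤ R + 1 - y by linarith),
      mul_nonneg (sub_nonneg.2 hxR.le) (show 0 ≤ R + 1 by linarith)]
  · rw [min_eq_left h]
    nlinarith [mul_nonneg hR.le (show 0 ≤ y - R - 1 by linarith),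
      mul_nonneg (show 0 ≤ R + 1 by linarith) (sub_nonneg.2 hxR.le)]

lemma norm_sq_abs_phi_sub_phi_mul_div_le {R T x y : ℝ} (P : ℝ) (hR : 0 < R) (hxR : x < R)
    (hRy : R ≤ y) (hT : R + 2 ≤ T) :
    ‖|phi R T x - phi R T y| ^ 2 * (P / (y - x))‖ ≤ (R + 1) / y * |P| := by
  have hd := abs_phi_sub_phi_le (T := T) hxR.le hRy hT
  have hsq : |phi R T x - phi R T y| ^ 2 ≤ min 1 (y - R) := by
    nlinarith [abs_nonneg (phi R T x - phi R T y), min_le_left 1 (y - R)]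
  rw [Real.norm_eq_abs, abs_mul, abs_div, abs_of_pos (by linarith : 0 < y - x), abs_pow,
    abs_abs]
  calc |phi R T x - phi R T y| ^ 2 * (|P| / (y - x))
        = |phi R T x - phi R T y| ^ 2 / (y - x) * |P| := by ring
    _ ≤ min 1 (y - R) / (y - x) * |P| := by
        gcongr; linarith
    _ ≤ (R + 1) / y * |P| := by gcongr ?_ * _; exact min_one_sub_div_sub_le hR hxR hRy

lemma integrableOn_rpow_mul_rpow_Ioo_prod_Ioi {s t a b : ℝ} (hs : -1 < s) (ht : t < -1)
    (hb : 0 < b) :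
    IntegrableOn (fun p : ℝ × ℝ => p.1 ^ s * p.2 ^ t) (Ioo 0 a ×ˢ Ioi b) := by
  have hfst : IntegrableOn (fun x : ℝ => x ^ s) (Ioo 0 a) :=
    (intervalIntegral.intervalIntegrable_rpow' hs).def'.mono_set
      (Ioo_subset_Ioc_self.trans Ioc_subset_uIoc)
  have hsnd : IntegrableOn (fun y : ℝ => y ^ t) (Ioi b) := (integrableOn_Ioi_rpow_iff hb).2 ht
  rw [IntegrableOn, Measure.volume_eq_prod, ← Measure.prod_restrict]
  exact hfst.mul_prod hsnd

lemma volume_restrict_Ico_prod_Ici (a b c : ℝ) :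
    volume.restrict (Ico a b ×ˢ Ici c) = volume.restrict (Ioo a b ×ˢ Ioi c) := by
  rw [Measure.volume_eq_prod, ← Measure.prod_restrict, ← Measure.prod_restrict,
    Measure.restrict_congr_set Ioo_ae_eq_Ico, Measure.restrict_congr_set Ioi_ae_eq_Ici]

theorem stmt_4_general (R : ℝ) (hR : 0 < R) (Pi : ℝ → ℝ → ℝ)
    (hmeas : Measurable fun p : ℝ × ℝ => Pi p.1 p.2)
    (ε₇ ε₈ c : ℝ) (hε₇ : -1 < ε₇) (hε₈ : 0 < ε₈)
    (hbound : ∀ x y : ℝ, 0 < x → x < R → R < y →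
      |Pi x y| ≤ c * x ^ ε₇ * y ^ (-ε₈)) :
    Tendsto (fun T : ℝ =>
        ∫ p in {p : ℝ × ℝ | 0 ≤ p.1 ∧ p.1 < R ∧ R ≤ p.2},
          |phi R T p.1 - phi R T p.2| ^ 2 * (Pi p.1 p.2 / (p.2 - p.1)))
      atTop (nhds 0) := by
  have hset : {p : ℝ × ℝ | 0 ≤ p.1 ∧ p.1 < R ∧ R ≤ p.2} = Ico 0 R ×ˢ Ici R := by
    ext p; simp [and_assoc]
  rw [hset, volume_restrict_Ico_prod_Ici]
  have h_bound : ∀ᶠ T in atTop, ∀ᵐ p ∂volume.restrict (Ioo 0 R ×ˢ Ioi R),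
      ‖|phi R T p.1 - phi R T p.2| ^ 2 * (Pi p.1 p.2 / (p.2 - p.1))‖
        ≤ c * (R + 1) * (p.1 ^ ε₇ * p.2 ^ (-ε₈ - 1)) := by
    filter_upwards [eventually_ge_atTop (R + 2)] with T hT
    filter_upwards [ae_restrict_mem (measurableSet_Ioo.prod measurableSet_Ioi)]
      with ⟨x, y⟩ ⟨⟨hx, hxR⟩, hRy⟩
    calc _ ≤ (R + 1) / y * |Pi x y| :=
          norm_sq_abs_phi_sub_phi_mul_div_le _ hR hxR hRy.le hT
      _ ≤ (R + 1) / y * (c * x ^ ε₇ * y ^ (-ε₈)) :=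
          mul_le_mul_of_nonneg_left (hbound x y hx hxR hRy) (by have := hR.trans hRy; positivity)
      _ = c * (R + 1) * (x ^ ε₇ * y ^ (-ε₈ - 1)) := by
          rw [Real.rpow_sub (hR.trans hRy), Real.rpow_one]; ring
  have h_lim : ∀ p : ℝ × ℝ, Tendsto (fun T => |phi R T p.1 - phi R T p.2| ^ 2
      * (Pi p.1 p.2 / (p.2 - p.1))) atTop (𝓝 0) := fun p => by
    simpa using (((tendsto_phi_atTop R p.1).sub (tendsto_phi_atTop R p.2)).abs.pow 2).mul_const
      (Pi p.1 p.2 / (p.2 - p.1))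
  simpa using tendsto_integral_filter_of_dominated_convergence _
    (.of_forall fun T => by fun_prop) h_bound
    ((integrableOn_rpow_mul_rpow_Ioo_prod_Ioi hε₇ (by linarith) hR).const_mul _)
    (.of_forall h_lim)

theorem stmt_4 (R : ℝ) (hR : 0 < R) (Pi : ℝ → ℝ → ℝ)
    (hmeas : Measurable fun p : ℝ × ℝ => Pi p.1 p.2)
    (ε₇ ε₈ c : ℝ) (hε₇ : -1 < ε₇) (hε₈ : 0 < ε₈) (hc : 0 < c)
    (hbound : ∀ x y : ℝ, 0 < x → x < R → R < y →
      |Pi x y| ≤ c * x ^ ε₇ * y ^ (-ε₈)) :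
    Tendsto (fun T : ℝ =>
        ∫ p in {p : ℝ × ℝ | 0 ≤ p.1 ∧ p.1 < R ∧ R ≤ p.2},
          |phi R T p.1 - phi R T p.2| ^ 2 * (Pi p.1 p.2 / (p.2 - p.1)))
      atTop (nhds 0) :=
  stmt_4_general R hR Pi hmeas ε₇ ε₈ c hε₇ hε₈ hbound
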